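/- arXiv:2010.02435 — 5 statements merged into one kernel-verified Lean document; each statement's English description precedes it below -/
import Mathlib

section
/- Let m ≥ 1 be an integer, let η > 0, t > 0, and let p, x ∈ ℝ³ satisfy |x − p| > η. Then ∫_{B_η(p)} (e^{−t|x−y|}/|x−y|) · (η² − |y − p|²)^m dy = 4π · η^{2(1+m)} · a_m(t) · e^{−t|x−p|}/|x−p|, where B_η(p) is the open ball of radius η centered at p and the integral is with respect to Lebesgue measure on ℝ³. -/
/-!
Centre spherical coordinates `(r, θ)` at `p` with polar axis through `x`; by the law of cosines
`‖x - y‖² = R² - 2Rr cos θ + r²` with `R = ‖x - p‖`. For `r < R` the θ-integral of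
`sin θ · e^{-t‖x - y‖}/‖x - y‖` has the antiderivative `-e^{-t‖x - y‖}/(tRr)`, so each sphere
`‖y - p‖ = r` contributes `4π r² · sinh(tr)/(tr) · e^{-tR}/R`, as a point charge at `p` would.
The remaining radial integral `∫₀^η r (η² - r²)^m sinh(tr) dr` is `η^{2(1+m)} t a_m(t)` after the
substitution `r = ηs`.

Spherical coordinates are reached as cylindrical coordinates about the axis followed by polar
coordinates in the half-plane `{(a, ρ) | ρ > 0}`. Every change of variables is done for lower
Lebesgue integrals of the nonnegative integrand, which needs no integrability side conditions.
-/

open MeasureTheory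

noncomputable section

/-- `a_m(t) = (1/t) ∫₀¹ s (1 − s²)^m sinh(η t s) ds`. -/
def aCoef (m : ℕ) (η t : ℝ) : ℝ :=
  (1 / t) * ∫ s in (0:ℝ)..1, s * (1 - s ^ 2) ^ m * Real.sinh (η * t * s)

open Real Set
open scoped ENNReal

theorem sqrt_polarCoord_symm {p : ℝ × ℝ} (hp : 0 ≤ p.1) :
    √((polarCoord.symm p).1 ^ 2 + (polarCoord.symm p).2 ^ 2) = p.1 := by
  simp only [polarCoord_symm_apply, mul_pow, ← mul_add, cos_sq_add_sin_sq, mul_one,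
    sqrt_sq hp]

theorem lintegral_comp_sqrt_sq_add_sq {h : ℝ → ℝ≥0∞} (hh : Measurable h) :
    ∫⁻ q : ℝ × ℝ, h √(q.1 ^ 2 + q.2 ^ 2)
      = ENNReal.ofReal (2 * π) * ∫⁻ r in Ioi 0, ENNReal.ofReal r * h r := by
  rw [← lintegral_comp_polarCoord_symm, polarCoord_target,
    setLIntegral_congr_fun (measurableSet_Ioi.prod measurableSet_Ioo)
      (g := fun p => (ENNReal.ofReal p.1 * h p.1) * 1)
      (fun p hp => by simp only [sqrt_polarCoord_symm (le_of_lt hp.1), smul_eq_mul, mul_one]),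
    Measure.volume_eq_prod, ← Measure.prod_restrict,
    lintegral_prod_mul (f := fun r => ENNReal.ofReal r * h r) (by fun_prop) aemeasurable_const,
    lintegral_const, one_mul, Measure.restrict_apply_univ, Real.volume_Ioo, mul_comm]
  ring_nf

theorem setLIntegral_snd_pos_eq_polarCoord (g : ℝ × ℝ → ℝ≥0∞) :
    ∫⁻ w in {w : ℝ × ℝ | 0 < w.2}, g w
      = ∫⁻ p in Ioi 0 ×ˢ Ioo 0 π, ENNReal.ofReal p.1 * g (polarCoord.symm p) := by
  have hpos : ∀ p ∈ polarCoord.target,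
      polarCoord.symm p ∈ {w : ℝ × ℝ | 0 < w.2} ↔ p ∈ Ioi (0:ℝ) ×ˢ Ioo 0 π := by
    rintro ⟨r, θ⟩ ⟨hr, hθ⟩
    simp only [mem_Ioi, mem_Ioo] at hr hθ
    simp only [polarCoord_symm_apply, mem_ofPred_eq, mem_prod, mem_Ioi, mem_Ioo, hr, true_and,
      mul_pos_iff_of_pos_left hr]
    refine ⟨fun hsin => ⟨?_, hθ.2⟩, fun h => sin_pos_of_pos_of_lt_pi h.1 h.2⟩
    by_contra! hθ0
    exact hsin.not_ge (sin_nonpos_of_nonpos_of_neg_pi_le hθ0 hθ.1.le)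
  have htarget : Ioi (0:ℝ) ×ˢ Ioo 0 π ∩ polarCoord.target = Ioi 0 ×ˢ Ioo 0 π :=
    inter_eq_self_of_subset_left
      (prod_mono subset_rfl (Ioo_subset_Ioo_left (by linarith [pi_pos])))
  rw [← lintegral_indicator (measurableSet_lt measurable_const measurable_snd),
    ← lintegral_comp_polarCoord_symm,
    setLIntegral_congr_fun polarCoord.open_target.measurableSet
      (g := (Ioi (0:ℝ) ×ˢ Ioo 0 π).indicator fun p => ENNReal.ofReal p.1 * g (polarCoord.symm p))
      (fun p hp => by simp only [indicator, hpos p hp, smul_eq_mul]; split_ifs <;> simp),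
    setLIntegral_indicator (measurableSet_Ioi.prod measurableSet_Ioo), htarget]

theorem lintegral_comp_fst_sqrt_eq_spherical {f : ℝ × ℝ → ℝ≥0∞} (hf : Measurable f) :
    ∫⁻ z : ℝ × ℝ × ℝ, f (z.1, √(z.2.1 ^ 2 + z.2.2 ^ 2))
      = ENNReal.ofReal (2 * π) *
          ∫⁻ p in Ioi 0 ×ˢ Ioo 0 π, ENNReal.ofReal (p.1 ^ 2 * sin p.2) * f (polarCoord.symm p) := by
  have hcyl : ∀ a, ∫⁻ q : ℝ × ℝ, f (a, √(q.1 ^ 2 + q.2 ^ 2))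
      = ENNReal.ofReal (2 * π) * ∫⁻ r in Ioi 0, ENNReal.ofReal r * f (a, r) :=
    fun a => lintegral_comp_sqrt_sq_add_sq (hf.comp measurable_prodMk_left)
  rw [Measure.volume_eq_prod, lintegral_prod _ (by fun_prop)]
  simp_rw [hcyl]
  rw [lintegral_const_mul' _ _ ENNReal.ofReal_ne_top]
  congr 1
  calc ∫⁻ a, ∫⁻ r in Ioi 0, ENNReal.ofReal r * f (a, r)
      = ∫⁻ w in univ ×ˢ Ioi 0, ENNReal.ofReal w.2 * f w := by
        rw [Measure.volume_eq_prod, setLIntegral_prod _ (by fun_prop), Measure.restrict_univ]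
    _ = ∫⁻ w in {w : ℝ × ℝ | 0 < w.2}, ENNReal.ofReal w.2 * f w := by rw [univ_prod]; rfl
    _ = _ := by
      rw [setLIntegral_snd_pos_eq_polarCoord]
      refine setLIntegral_congr_fun (measurableSet_Ioi.prod measurableSet_Ioo) fun p hp => ?_
      rw [polarCoord_symm_apply, ← mul_assoc, ← ENNReal.ofReal_mul (le_of_lt hp.1)]
      ring_nf

theorem lintegral_comp_norm_sub_norm_of_norm_eq {E : Type*} [NormedAddCommGroup E]
    [InnerProductSpace ℝ E] [FiniteDimensional ℝ E] [MeasurableSpace E] [BorelSpace E]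
    {v w : E} (h : ‖w‖ = ‖v‖) (F : ℝ × ℝ → ℝ≥0∞) :
    ∫⁻ y, F (‖v - y‖, ‖y‖) = ∫⁻ y, F (‖w - y‖, ‖y‖) := by
  set e := (ℝ ∙ (w - v))ᗮ.reflection
  have hew : e w = v := Submodule.reflection_sub h
  rw [← e.measurePreserving.lintegral_comp_emb e.toHomeomorph.measurableEmbedding]
  simp_rw [← hew, ← map_sub, LinearIsometryEquiv.norm_map]

def euclideanThreeEquiv : ℝ × ℝ × ℝ ≃ᵐ EuclideanSpace ℝ (Fin 3) :=
  (((MeasurableEquiv.refl ℝ).prodCongr MeasurableEquiv.finTwoArrow.symm).trans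
      (MeasurableEquiv.piFinSuccAbove (fun _ : Fin 3 => ℝ) 0).symm).trans
    (MeasurableEquiv.toLp 2 (Fin 3 → ℝ))

theorem volume_preserving_euclideanThreeEquiv : MeasurePreserving euclideanThreeEquiv :=
  (PiLp.volume_preserving_toLp (Fin 3)).comp
    (((volume_preserving_piFinSuccAbove (fun _ : Fin 3 => ℝ) 0).symm _).comp
      ((MeasurePreserving.id volume).prod ((volume_preserving_finTwoArrow ℝ).symm _)))

theorem euclideanThreeEquiv_apply (z : ℝ × ℝ × ℝ) :
    euclideanThreeEquiv z = !₂[z.1, z.2.1, z.2.2] := by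
  ext i; fin_cases i <;> rfl

theorem norm_euclideanThree (a b c : ℝ) : ‖!₂[a, b, c]‖ = √(a ^ 2 + b ^ 2 + c ^ 2) := by
  simp [EuclideanSpace.norm_eq, Fin.sum_univ_three]

theorem lintegral_comp_norm_sub_norm_eq_spherical {F : ℝ × ℝ → ℝ≥0∞} (hF : Measurable F)
    (v : EuclideanSpace ℝ (Fin 3)) :
    ∫⁻ y, F (‖v - y‖, ‖y‖)
      = ENNReal.ofReal (2 * π) * ∫⁻ p in Ioi 0 ×ˢ Ioo 0 π, ENNReal.ofReal (p.1 ^ 2 * sin p.2) *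
          F (√(‖v‖ ^ 2 - 2 * ‖v‖ * p.1 * cos p.2 + p.1 ^ 2), p.1) := by
  set R := ‖v‖
  have hw : ‖!₂[R, 0, 0]‖ = R := by simp [norm_euclideanThree, sqrt_sq (norm_nonneg v), R]
  have hcoord : ∀ z : ℝ × ℝ × ℝ,
      F (‖!₂[R, 0, 0] - euclideanThreeEquiv z‖, ‖euclideanThreeEquiv z‖)
        = F (√((R - z.1) ^ 2 + √(z.2.1 ^ 2 + z.2.2 ^ 2) ^ 2),
            √(z.1 ^ 2 + √(z.2.1 ^ 2 + z.2.2 ^ 2) ^ 2)) := by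
    intro z
    rw [sq_sqrt (by positivity), euclideanThreeEquiv_apply, norm_euclideanThree,
      ← WithLp.toLp_sub, Matrix.cons_sub_cons, Matrix.cons_sub_cons, Matrix.cons_sub_cons,
      Matrix.empty_sub_empty, norm_euclideanThree]
    ring_nf
  rw [lintegral_comp_norm_sub_norm_of_norm_eq hw,
    ← volume_preserving_euclideanThreeEquiv.lintegral_comp_emb
      euclideanThreeEquiv.measurableEmbedding]
  simp_rw [hcoord]
  rw [lintegral_comp_fst_sqrt_eq_spherical (f := fun w => F (√((R - w.1) ^ 2 + w.2 ^ 2),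
    √(w.1 ^ 2 + w.2 ^ 2))) (by fun_prop)]
  congr 1
  refine setLIntegral_congr_fun (measurableSet_Ioi.prod measurableSet_Ioo) fun p hp => ?_
  rw [sqrt_polarCoord_symm hp.1.le, polarCoord_symm_apply]
  congr 4
  linear_combination p.1 ^ 2 * sin_sq_add_cos_sq p.2

theorem setLIntegral_ball_comp_norm_sub_eq_spherical {F : ℝ × ℝ → ℝ≥0∞} (hF : Measurable F)
    (x c : EuclideanSpace ℝ (Fin 3)) (η : ℝ) :
    ∫⁻ y in Metric.ball c η, F (‖x - y‖, ‖y - c‖)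
      = ENNReal.ofReal (2 * π) * ∫⁻ p in Ioo 0 η ×ˢ Ioo 0 π, ENNReal.ofReal (p.1 ^ 2 * sin p.2) *
          F (√(‖x - c‖ ^ 2 - 2 * ‖x - c‖ * p.1 * cos p.2 + p.1 ^ 2), p.1) := by
  set G := {q : ℝ × ℝ | q.2 < η}.indicator F
  have hball : ∀ y, (Metric.ball c η).indicator (fun y => F (‖x - y‖, ‖y - c‖)) y
      = G (‖(x - c) - (y - c)‖, ‖y - c‖) := by
    intro y
    simp only [indicator, Metric.mem_ball, dist_eq_norm, sub_sub_sub_cancel_right, G,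
      mem_ofPred_eq]
  have hrestrict : ∀ p : ℝ × ℝ, ENNReal.ofReal (p.1 ^ 2 * sin p.2) *
      G (√(‖x - c‖ ^ 2 - 2 * ‖x - c‖ * p.1 * cos p.2 + p.1 ^ 2), p.1)
        = {p : ℝ × ℝ | p.1 < η}.indicator (fun p => ENNReal.ofReal (p.1 ^ 2 * sin p.2) *
            F (√(‖x - c‖ ^ 2 - 2 * ‖x - c‖ * p.1 * cos p.2 + p.1 ^ 2), p.1)) p := by
    intro p
    simp only [indicator, G, mem_ofPred_eq]
    split_ifs <;> simp
  have hset : {p : ℝ × ℝ | p.1 < η} ∩ Ioi (0:ℝ) ×ˢ Ioo 0 π = Ioo 0 η ×ˢ Ioo 0 π := by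
    ext p; simp only [mem_inter_iff, mem_prod, mem_Ioi, mem_Ioo, mem_ofPred_eq]; tauto
  rw [← lintegral_indicator measurableSet_ball]
  simp_rw [hball]
  rw [lintegral_sub_right_eq_self (fun y => G (‖(x - c) - y‖, ‖y‖)) c,
    lintegral_comp_norm_sub_norm_eq_spherical (hF.indicator (measurableSet_lt measurable_snd
      measurable_const)),
    setLIntegral_congr_fun (measurableSet_Ioi.prod measurableSet_Ioo) (fun p _ => hrestrict p),
    setLIntegral_indicator (measurableSet_lt measurable_fst measurable_const), hset]

theorem law_of_cosines_pos {R r : ℝ} (hr : 0 < r) (hrR : r < R) (θ : ℝ) :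
    0 < R ^ 2 - 2 * R * r * cos θ + r ^ 2 := by
  have hR : 0 < R := hr.trans hrR
  nlinarith [mul_le_mul_of_nonneg_left (cos_le_one θ) (by positivity : (0:ℝ) ≤ 2 * R * r),
    mul_pos (sub_pos.mpr hrR) (sub_pos.mpr hrR)]

theorem integral_sin_mul_exp_div_sqrt {t R r : ℝ} (ht : t ≠ 0) (hr : 0 < r) (hrR : r < R) :
    ∫ θ in 0..π, sin θ * (exp (-t * √(R ^ 2 - 2 * R * r * cos θ + r ^ 2)) /
        √(R ^ 2 - 2 * R * r * cos θ + r ^ 2))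
      = 2 * exp (-t * R) * sinh (t * r) / (t * R * r) := by
  have hR : 0 < R := hr.trans hrR
  set c : ℝ → ℝ := fun θ => R ^ 2 - 2 * R * r * cos θ + r ^ 2
  have hc : ∀ θ, 0 < c θ := law_of_cosines_pos hr hrR
  have hderiv : ∀ θ, HasDerivAt (fun θ => -(1 / (t * R * r)) * exp (-t * √(c θ)))
      (sin θ * (exp (-t * √(c θ)) / √(c θ))) θ := by
    intro θ
    have hc' : HasDerivAt c (2 * R * r * sin θ) θ :=
      ((((hasDerivAt_cos θ).const_mul (2 * R * r)).const_sub (R ^ 2)).add_const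
        (r ^ 2)).congr_deriv (by ring)
    refine (((((hasDerivAt_sqrt (hc θ).ne').comp θ hc').const_mul (-t)).exp).const_mul
      (-(1 / (t * R * r)))).congr_deriv ?_
    simp only [Function.comp_apply]
    field_simp [(sqrt_pos.mpr (hc θ)).ne']
  have hint : IntervalIntegrable (fun θ => sin θ * (exp (-t * √(c θ)) / √(c θ))) volume 0 π :=
    Continuous.intervalIntegrable
      (by fun_prop (disch := exact fun θ => (sqrt_pos.mpr (hc θ)).ne')) _ _
  rw [intervalIntegral.integral_eq_sub_of_hasDerivAt (fun θ _ => hderiv θ) hint]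
  have hc0 : c 0 = (R - r) ^ 2 := by simp only [c, cos_zero]; ring
  have hcpi : c π = (R + r) ^ 2 := by simp only [c, cos_pi]; ring
  rw [hc0, hcpi, sqrt_sq (sub_pos.mpr hrR).le, sqrt_sq (by linarith), sinh_eq,
    show -t * (R + r) = -t * R + -(t * r) by ring, show -t * (R - r) = -t * R + t * r by ring,
    exp_add, exp_add]
  field_simp
  ring

theorem setLIntegral_Ioo_ofReal_eq {f : ℝ → ℝ} {a b : ℝ} (hab : a ≤ b)
    (hf : ContinuousOn f (Icc a b)) (hf₀ : ∀ x ∈ Ioo a b, 0 ≤ f x) :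
    ∫⁻ x in Ioo a b, ENNReal.ofReal (f x) = ENNReal.ofReal (∫ x in a..b, f x) := by
  rw [intervalIntegral.integral_of_le hab, integral_Ioc_eq_integral_Ioo,
    ofReal_integral_eq_lintegral_ofReal (hf.integrableOn_Icc.mono_set Ioo_subset_Icc_self)
      (ae_restrict_of_forall_mem measurableSet_Ioo hf₀)]

theorem setLIntegral_sin_mul_exp_div_sqrt {t R r : ℝ} (ht : t ≠ 0) (hr : 0 < r) (hrR : r < R) :
    ∫⁻ θ in Ioo 0 π, ENNReal.ofReal (sin θ * (exp (-t * √(R ^ 2 - 2 * R * r * cos θ + r ^ 2)) /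
        √(R ^ 2 - 2 * R * r * cos θ + r ^ 2)))
      = ENNReal.ofReal (2 * exp (-t * R) * sinh (t * r) / (t * R * r)) := by
  have hc := law_of_cosines_pos hr hrR
  rw [setLIntegral_Ioo_ofReal_eq pi_pos.le _
    (fun θ hθ => mul_nonneg (sin_nonneg_of_nonneg_of_le_pi hθ.1.le hθ.2.le) (by positivity)),
    integral_sin_mul_exp_div_sqrt ht hr hrR]
  exact Continuous.continuousOn (by fun_prop (disch := exact fun θ => (sqrt_pos.mpr (hc θ)).ne'))

theorem integral_mul_pow_mul_sinh_eq_aCoef (m : ℕ) {η t : ℝ} (hη : η ≠ 0) (ht : t ≠ 0) :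
    ∫ r in 0..η, r * (η ^ 2 - r ^ 2) ^ m * sinh (t * r)
      = η ^ (2 * (1 + m)) * (t * aCoef m η t) := by
  have hscale := intervalIntegral.integral_comp_mul_left (a := 0) (b := 1)
    (fun r => r * (η ^ 2 - r ^ 2) ^ m * sinh (t * r)) hη
  rw [mul_zero, mul_one, smul_eq_mul, eq_inv_mul_iff_mul_eq₀ hη] at hscale
  rw [aCoef, one_div, mul_inv_cancel_left₀ ht, ← hscale,
    ← intervalIntegral.integral_const_mul, ← intervalIntegral.integral_const_mul]
  refine intervalIntegral.integral_congr fun s _ => ?_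
  rw [show η ^ 2 - (η * s) ^ 2 = η ^ 2 * (1 - s ^ 2) by ring, show t * (η * s) = η * t * s by ring,
    mul_pow, pow_mul, pow_add]
  ring

theorem mul_pow_mul_sinh_nonneg (m : ℕ) {η t r : ℝ} (hr : 0 ≤ r) (hrη : r ≤ η) (ht : 0 ≤ t) :
    0 ≤ r * (η ^ 2 - r ^ 2) ^ m * sinh (t * r) :=
  mul_nonneg (mul_nonneg hr (pow_nonneg (by nlinarith) m))
    (sinh_nonneg_iff.mpr (mul_nonneg ht hr))

theorem setLIntegral_sphericalCoord_yukawa_mul_pow (m : ℕ) {η t R : ℝ} (hη : 0 < η) (ht : 0 < t)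
    (hηR : η < R) :
    ∫⁻ p in Ioo 0 η ×ˢ Ioo 0 π, ENNReal.ofReal (p.1 ^ 2 * sin p.2) *
        ENNReal.ofReal (exp (-t * √(R ^ 2 - 2 * R * p.1 * cos p.2 + p.1 ^ 2)) /
          √(R ^ 2 - 2 * R * p.1 * cos p.2 + p.1 ^ 2) * (η ^ 2 - p.1 ^ 2) ^ m)
      = ENNReal.ofReal (2 * exp (-t * R) / (t * R) *
          ∫ r in 0..η, r * (η ^ 2 - r ^ 2) ^ m * sinh (t * r)) := by
  have hR : 0 < R := hη.trans hηR
  have hinner : ∀ r ∈ Ioo 0 η, ∫⁻ θ in Ioo 0 π, ENNReal.ofReal (r ^ 2 * sin θ) *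
        ENNReal.ofReal (exp (-t * √(R ^ 2 - 2 * R * r * cos θ + r ^ 2)) /
          √(R ^ 2 - 2 * R * r * cos θ + r ^ 2) * (η ^ 2 - r ^ 2) ^ m)
      = ENNReal.ofReal (2 * exp (-t * R) / (t * R) * (r * (η ^ 2 - r ^ 2) ^ m * sinh (t * r))) := by
    intro r hr
    have hpow : 0 ≤ (η ^ 2 - r ^ 2) ^ m := pow_nonneg (by nlinarith [hr.1, hr.2]) m
    calc _ = ∫⁻ θ in Ioo 0 π, ENNReal.ofReal (r ^ 2 * (η ^ 2 - r ^ 2) ^ m) *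
          ENNReal.ofReal (sin θ * (exp (-t * √(R ^ 2 - 2 * R * r * cos θ + r ^ 2)) /
            √(R ^ 2 - 2 * R * r * cos θ + r ^ 2))) := by
          refine setLIntegral_congr_fun measurableSet_Ioo fun θ hθ => ?_
          have hsin := sin_nonneg_of_nonneg_of_le_pi hθ.1.le hθ.2.le
          rw [← ENNReal.ofReal_mul (by positivity), ← ENNReal.ofReal_mul (by positivity)]
          ring_nf
      _ = ENNReal.ofReal (r ^ 2 * (η ^ 2 - r ^ 2) ^ m) *
          ENNReal.ofReal (2 * exp (-t * R) * sinh (t * r) / (t * R * r)) := by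
          rw [lintegral_const_mul' _ _ ENNReal.ofReal_ne_top,
            setLIntegral_sin_mul_exp_div_sqrt ht.ne' hr.1 (hr.2.trans hηR)]
      _ = _ := by
          rw [← ENNReal.ofReal_mul (by positivity)]
          congr 1
          field_simp
  rw [Measure.volume_eq_prod, setLIntegral_prod _ (by fun_prop),
    setLIntegral_congr_fun measurableSet_Ioo hinner,
    setLIntegral_Ioo_ofReal_eq hη.le (Continuous.continuousOn (by fun_prop)) fun r hr => ?_,
    intervalIntegral.integral_const_mul]
  exact mul_nonneg (by positivity) (mul_pow_mul_sinh_nonneg m hr.1.le hr.2.le ht.le)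

theorem stmt_0_general (m : ℕ) (η t : ℝ) (hη : 0 < η) (ht : 0 < t)
    (p x : EuclideanSpace ℝ (Fin 3)) (hx : η < ‖x - p‖) :
    (∫ y in Metric.ball p η,
        Real.exp (-t * ‖x - y‖) / ‖x - y‖ * (η ^ 2 - ‖y - p‖ ^ 2) ^ m)
      = 4 * Real.pi * η ^ (2 * (1 + m)) * aCoef m η t *
          (Real.exp (-t * ‖x - p‖) / ‖x - p‖) := by
  have hnonneg : ∀ y ∈ Metric.ball p η,
      0 ≤ Real.exp (-t * ‖x - y‖) / ‖x - y‖ * (η ^ 2 - ‖y - p‖ ^ 2) ^ m := by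
    intro y hy
    rw [Metric.mem_ball, dist_eq_norm] at hy
    have : 0 ≤ η ^ 2 - ‖y - p‖ ^ 2 := by nlinarith [norm_nonneg (y - p)]
    positivity
  have hspherical := setLIntegral_ball_comp_norm_sub_eq_spherical
    (F := fun q => ENNReal.ofReal (Real.exp (-t * q.1) / q.1 * (η ^ 2 - q.2 ^ 2) ^ m))
    (by fun_prop) x p η
  have hradial : 0 ≤ ∫ r in 0..η, r * (η ^ 2 - r ^ 2) ^ m * sinh (t * r) :=
    intervalIntegral.integral_nonneg hη.le fun r hr => mul_pow_mul_sinh_nonneg m hr.1 hr.2 ht.le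
  rw [integral_eq_lintegral_of_nonneg_ae (ae_restrict_of_forall_mem measurableSet_ball hnonneg)
      (by fun_prop), hspherical, setLIntegral_sphericalCoord_yukawa_mul_pow m hη ht hx,
    ENNReal.toReal_mul, ENNReal.toReal_ofReal (by positivity),
    ENNReal.toReal_ofReal (by positivity),
    integral_mul_pow_mul_sinh_eq_aCoef m hη.ne' ht.ne']
  field_simp
  ring

theorem stmt_0 (m : ℕ) (hm : 1 ≤ m) (η t : ℝ) (hη : 0 < η) (ht : 0 < t)
    (p x : EuclideanSpace ℝ (Fin 3)) (hx : η < ‖x - p‖) :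
    (∫ y in Metric.ball p η,
        Real.exp (-t * ‖x - y‖) / ‖x - y‖ * (η ^ 2 - ‖y - p‖ ^ 2) ^ m)
      = 4 * Real.pi * η ^ (2 * (1 + m)) * aCoef m η t *
          (Real.exp (-t * ‖x - p‖) / ‖x - p‖) :=
  stmt_0_general m η t hη ht p x hx
end
end

section
/- Let m ≥ 1 be an integer and η > 0. Then, as t → ∞, a_m(t) is asymptotically equivalent to η · 2^{m−1} · m! · e^{tη}/(tη)^{m+2}; that is, the ratio a_m(t) · (tη)^{m+2} e^{−tη} / (η · 2^{m−1} · m!) tends to 1 as t → ∞. -/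
/-!
Put `x = ηt`, so that `a_m(t) (tη)^{m+2} e^{-tη} / η = x^{m+1} e^{-x} ∫₀¹ s (1 - s²)^m sinh(x s) ds`,
and split `sinh(xs) = (e^{xs} - e^{-xs}) / 2`. The substitution `s = 1 - u/x` turns the
`e^{xs}` half into `∫₀ˣ (1 - u/x) (2 - u/x)^m u^m e^{-u} du`, which tends to
`2^m ∫₀^∞ u^m e^{-u} du = 2^m m!` by dominated convergence. The `e^{-xs}` half keeps a bounded
integral, so the prefactor `x^{m+1} e^{-x}` sends it to `0`.
-/

open MeasureTheory Filter Set Real Topology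

noncomputable section

lemma integral_exp_neg_mul_pow_Ioi (n : ℕ) : ∫ u in Ioi (0:ℝ), exp (-u) * u ^ n = n.factorial := by
  rw [← Real.Gamma_nat_eq_factorial, Real.Gamma_eq_integral (by positivity), add_sub_cancel_right]
  simp only [Real.rpow_natCast]

lemma integrableOn_exp_neg_mul_pow_Ioi (n : ℕ) :
    IntegrableOn (fun u : ℝ => exp (-u) * u ^ n) (Ioi 0) := by
  simpa only [add_sub_cancel_right, Real.rpow_natCast] using
    Real.GammaIntegral_convergent (s := n + 1) (by positivity)

lemma intervalIntegral_mul_sinh_mul {f : ℝ → ℝ} (hf : Continuous f) (a b x : ℝ) :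
    ∫ s in a..b, f s * sinh (x * s) =
      ((∫ s in a..b, f s * exp (x * s)) - ∫ s in a..b, f s * exp (-(x * s))) / 2 := by
  have hp : IntervalIntegrable (fun s => f s * exp (x * s)) volume a b :=
    (hf.mul (by fun_prop)).intervalIntegrable _ _
  have hn : IntervalIntegrable (fun s => f s * exp (-(x * s))) volume a b :=
    (hf.mul (by fun_prop)).intervalIntegrable _ _
  rw [← intervalIntegral.integral_sub hp hn, ← intervalIntegral.integral_div]
  congr with s
  rw [sinh_eq]
  ring

lemma abs_intervalIntegral_mul_exp_neg_mul_le {f : ℝ → ℝ} {C x : ℝ}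
    (hf : ∀ s ∈ Ioc (0:ℝ) 1, |f s| ≤ C) (hx : 0 ≤ x) :
    |∫ s in (0:ℝ)..1, f s * exp (-(x * s))| ≤ C := by
  have h := intervalIntegral.norm_integral_le_of_norm_le_const (a := 0) (b := 1) (C := C)
    (f := fun s => f s * exp (-(x * s))) fun s hs => by
      rw [uIoc_of_le zero_le_one] at hs
      rw [norm_mul, norm_of_nonneg (exp_pos _).le]
      calc ‖f s‖ * exp (-(x * s)) ≤ ‖f s‖ * 1 := by
            gcongr
            exact exp_le_one_iff.2 (by nlinarith [hs.1])
        _ ≤ C := by rw [mul_one]; exact hf s hs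
  simpa using h

lemma intervalIntegral_mul_exp_mul_eq {f : ℝ → ℝ} {x : ℝ} (hx : x ≠ 0) :
    x * exp (-x) * ∫ s in (0:ℝ)..1, f s * exp (x * s) =
      ∫ u in (0:ℝ)..x, f (1 - u / x) * exp (-u) := by
  set g : ℝ → ℝ := fun s => f s * exp (x * s)
  have hg : ∀ u, f (1 - u / x) * exp (-u) = exp (-x) * g (1 - u / x) := by
    intro u
    rw [mul_left_comm, ← exp_add, show -x + x * (1 - u / x) = -u by field_simp; ring]
  simp only [hg, intervalIntegral.integral_const_mul,
    intervalIntegral.integral_comp_div (fun v => g (1 - v)) hx, zero_div, div_self hx,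
    intervalIntegral.integral_comp_sub_left g, sub_zero, sub_self, smul_eq_mul]
  ring

lemma pow_mul_exp_neg_mul_intervalIntegral_eq (m : ℕ) {x : ℝ} (hx : x ≠ 0) :
    x ^ (m + 1) * exp (-x) * ∫ s in (0:ℝ)..1, s * (1 - s ^ 2) ^ m * exp (x * s) =
      ∫ u in (0:ℝ)..x, (1 - u / x) * (2 - u / x) ^ m * (exp (-u) * u ^ m) := by
  rw [pow_succ, mul_assoc, mul_assoc, ← mul_assoc x, intervalIntegral_mul_exp_mul_eq hx,
    ← intervalIntegral.integral_const_mul]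
  congr with u
  have hu : x ^ m * (u / x) ^ m = u ^ m := by rw [← mul_pow, mul_div_cancel₀ _ hx]
  rw [show 1 - (1 - u / x) ^ 2 = u / x * (2 - u / x) by ring, mul_pow]
  linear_combination (1 - u / x) * (2 - u / x) ^ m * exp (-u) * hu

lemma tendsto_intervalIntegral_comp_div_mul {φ g : ℝ → ℝ} (hφ : Continuous φ)
    (hg : IntegrableOn g (Ioi 0)) :
    Tendsto (fun x => ∫ u in (0:ℝ)..x, φ (u / x) * g u) atTop
      (𝓝 (φ 0 * ∫ u in Ioi 0, g u)) := by
  obtain ⟨C, hC⟩ := (isCompact_Icc (a := (0:ℝ)) (b := 1)).exists_bound_of_continuousOn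
    hφ.continuousOn
  have hC0 : 0 ≤ C := (norm_nonneg _).trans (hC 0 ⟨le_rfl, zero_le_one⟩)
  let F : ℝ → ℝ → ℝ := fun x => (Iic x).indicator fun u => φ (u / x) * g u
  have hF : Tendsto (fun x => ∫ u in Ioi 0, F x u) atTop (𝓝 (∫ u in Ioi 0, φ 0 * g u)) := by
    refine tendsto_integral_filter_of_dominated_convergence (fun u => C * ‖g u‖) ?_ ?_
      (hg.norm.const_mul C) ?_
    · exact .of_forall fun x => ((hφ.comp (continuous_id.div_const x)).aestronglyMeasurable.mul
        hg.aestronglyMeasurable).indicator measurableSet_Iic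
    · filter_upwards [eventually_gt_atTop 0] with x hx
      filter_upwards [ae_restrict_mem measurableSet_Ioi] with u (hu : 0 < u)
      dsimp only [F]
      by_cases hux : u ≤ x
      · have hv : u / x ∈ Icc (0:ℝ) 1 := ⟨by positivity, (div_le_one hx).2 hux⟩
        rw [indicator_of_mem (show u ∈ Iic x from hux), norm_mul]
        exact mul_le_mul_of_nonneg_right (hC _ hv) (norm_nonneg _)
      · rw [indicator_of_notMem (show u ∉ Iic x from hux), norm_zero]
        positivity
    · refine .of_forall fun u => ?_
      have hφu : Tendsto (fun x => φ (u / x) * g u) atTop (𝓝 (φ 0 * g u)) :=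
        ((hφ.tendsto 0).comp (tendsto_const_nhds.div_atTop tendsto_id)).mul_const (g u)
      refine hφu.congr' ?_
      filter_upwards [eventually_ge_atTop u] with x hx
      exact (indicator_of_mem (show u ∈ Iic x from hx) (fun u => φ (u / x) * g u)).symm
  rw [integral_const_mul] at hF
  refine hF.congr' ?_
  filter_upwards [eventually_ge_atTop 0] with x hx
  rw [intervalIntegral.integral_of_le hx, setIntegral_indicator measurableSet_Iic, Ioi_inter_Iic]

lemma tendsto_pow_mul_exp_neg_mul_intervalIntegral_sinh (m : ℕ) :
    Tendsto (fun x : ℝ =>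
        x ^ (m + 1) * exp (-x) * ∫ s in (0:ℝ)..1, s * (1 - s ^ 2) ^ m * sinh (x * s))
      atTop (𝓝 (2 ^ m * m.factorial / 2)) := by
  have hexp : Tendsto (fun x : ℝ =>
      x ^ (m + 1) * exp (-x) * ∫ s in (0:ℝ)..1, s * (1 - s ^ 2) ^ m * exp (x * s))
      atTop (𝓝 (2 ^ m * m.factorial)) := by
    have h := tendsto_intervalIntegral_comp_div_mul (φ := fun v => (1 - v) * (2 - v) ^ m)
      (by fun_prop) (integrableOn_exp_neg_mul_pow_Ioi m)
    rw [integral_exp_neg_mul_pow_Ioi, sub_zero, sub_zero, one_mul] at h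
    refine h.congr' ?_
    filter_upwards [eventually_gt_atTop 0] with x hx
    exact (pow_mul_exp_neg_mul_intervalIntegral_eq m hx.ne').symm
  have hexp_neg : Tendsto (fun x : ℝ =>
      x ^ (m + 1) * exp (-x) * ∫ s in (0:ℝ)..1, s * (1 - s ^ 2) ^ m * exp (-(x * s)))
      atTop (𝓝 0) := by
    refine (tendsto_pow_mul_exp_neg_atTop_nhds_zero (m + 1)).zero_mul_isBoundedUnder_le
      (isBoundedUnder_of_eventually_le (a := 1) ?_)
    filter_upwards [eventually_ge_atTop 0] with x hx
    refine abs_intervalIntegral_mul_exp_neg_mul_le (fun s hs => ?_) hx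
    have h1 : 0 ≤ 1 - s ^ 2 := by nlinarith [hs.1, hs.2]
    rw [abs_of_nonneg (mul_nonneg hs.1.le (pow_nonneg h1 m))]
    exact mul_le_one₀ hs.2 (pow_nonneg h1 m) (pow_le_one₀ h1 (by nlinarith))
  have h := (hexp.sub hexp_neg).div_const 2
  rw [sub_zero] at h
  refine h.congr fun x => ?_
  rw [intervalIntegral_mul_sinh_mul (by fun_prop)]
  ring

theorem stmt_2 (m : ℕ) (hm : 1 ≤ m) (η : ℝ) (hη : 0 < η) :
    Filter.Tendsto
      (fun t : ℝ =>
        aCoef m η t * (t * η) ^ (m + 2) * Real.exp (-(t * η)) /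
          (η * 2 ^ (m - 1) * (Nat.factorial m : ℝ)))
      Filter.atTop (nhds 1) := by
  have h := ((tendsto_pow_mul_exp_neg_mul_intervalIntegral_sinh m).comp
    (tendsto_id.const_mul_atTop hη)).div_const (2 ^ (m - 1) * (m.factorial : ℝ))
  have h2 : (2:ℝ) ^ m = 2 ^ (m - 1) * 2 := by rw [← pow_succ, Nat.sub_add_cancel hm]
  rw [h2, show (2:ℝ) ^ (m - 1) * 2 * m.factorial / 2 / (2 ^ (m - 1) * m.factorial) = 1 by
    field_simp] at h
  refine h.congr' ?_
  filter_upwards [eventually_gt_atTop 0] with t ht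
  simp only [Function.comp_apply, id, aCoef]
  field_simp
  ring

end
end

section
/- Let m ≥ 1 be an integer and 0 < R₁ < R₂. Then, as t → ∞, b_m(t) is asymptotically equivalent to (−1)^m · 2^m · m! · R₁^{m+1} (R₂² − R₁²)^m · e^{−R₁ t}/t^{m+2}; that is, the ratio b_m(t) · t^{m+2} e^{R₁ t} / ((−1)^m 2^m m! R₁^{m+1} (R₂² − R₁²)^m) tends to 1 as t → ∞. -/
/-!
Substituting `s = R₁ + u` splits `R₁² - s² = u * (-(2 R₁ + u))`, so that
`t ^ (m + 2) * exp (R₁ t) * b_m(t) = t ^ (m + 1) * ∫₀^{R₂ - R₁} u ^ m g(u) exp (-u t) du`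
with `g(u) = (R₁ + u) (R₂² - (R₁ + u)²)^m (-(2 R₁ + u))^m` continuous. By Watson's lemma
(rescale `v = t u`, then dominated convergence against `M v ^ m exp (-v)`) the right side tends
to `m! * g 0`, which is exactly the constant `(-1)^m 2^m m! R₁^(m+1) (R₂² - R₁²)^m`.
-/

open MeasureTheory

noncomputable section

/-- `b_m(t) = (1/t) ∫_{R₁}^{R₂} s (R₂² − s²)^m (R₁² − s²)^m e^{−st} ds`. -/
def bCoef (m : ℕ) (R₁ R₂ t : ℝ) : ℝ :=
  (1 / t) * ∫ s in R₁..R₂,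
    s * (R₂ ^ 2 - s ^ 2) ^ m * (R₁ ^ 2 - s ^ 2) ^ m * Real.exp (-(s * t))

open Filter Topology Set Real Nat

lemma integral_Ioi_pow_mul_exp_neg (m : ℕ) : ∫ x in Ioi (0 : ℝ), x ^ m * exp (-x) = m ! := by
  rw [← Gamma_nat_eq_factorial, Gamma_eq_integral (by positivity)]
  refine setIntegral_congr_fun measurableSet_Ioi fun x _ => ?_
  simp [mul_comm]

lemma integrableOn_Ioi_pow_mul_exp_neg (m : ℕ) :
    IntegrableOn (fun x : ℝ => x ^ m * exp (-x)) (Ioi 0) := by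
  refine (GammaIntegral_convergent (s := m + 1) (by positivity)).congr_fun (fun x _ => ?_)
    measurableSet_Ioi
  simp [mul_comm]

lemma pow_succ_mul_intervalIntegral_pow_mul_exp_neg_mul (m : ℕ) (g : ℝ → ℝ) (L : ℝ) {t : ℝ}
    (ht : 0 < t) :
    t ^ (m + 1) * ∫ u in 0..L, u ^ m * g u * exp (-(u * t)) =
      ∫ v in 0..t * L, v ^ m * g (v / t) * exp (-v) := by
  have hsub := intervalIntegral.integral_comp_mul_left
    (fun v => (v / t) ^ m * g (v / t) * exp (-v)) (a := 0) (b := L) ht.ne'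
  simp only [mul_div_cancel_left₀ _ ht.ne', mul_zero, smul_eq_mul] at hsub
  simp only [div_pow, div_eq_mul_inv (_ ^ m), mul_right_comm _ (t ^ m)⁻¹, mul_comm t,
    intervalIntegral.integral_mul_const] at hsub
  rw [hsub]
  field_simp
  ring

lemma intervalIntegral_eq_setIntegral_Ioi_indicator (f : ℝ → ℝ) {b : ℝ} (hb : 0 ≤ b) :
    ∫ v in 0..b, f v = ∫ v in Ioi 0, (Iic b).indicator f v := by
  rw [intervalIntegral.integral_of_le hb, setIntegral_indicator measurableSet_Iic, Ioi_inter_Iic]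

/-- Watson's lemma, leading term. -/
theorem tendsto_pow_succ_mul_intervalIntegral_pow_mul_exp_neg_mul (m : ℕ) {g : ℝ → ℝ} {L : ℝ}
    (hL : 0 < L) (hg : ContinuousOn g (Icc 0 L)) :
    Tendsto (fun t => t ^ (m + 1) * ∫ u in 0..L, u ^ m * g u * exp (-(u * t))) atTop
      (𝓝 (m ! * g 0)) := by
  set F : ℝ → ℝ → ℝ := fun t => (Iic (t * L)).indicator fun v => v ^ m * g (v / t) * exp (-v)
  have hF : ∀ᶠ t in atTop, ∫ v in Ioi 0, F t v =
      t ^ (m + 1) * ∫ u in 0..L, u ^ m * g u * exp (-(u * t)) := by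
    filter_upwards [eventually_gt_atTop 0] with t ht
    rw [pow_succ_mul_intervalIntegral_pow_mul_exp_neg_mul m g L ht,
      intervalIntegral_eq_setIntegral_Ioi_indicator _ (by positivity)]
  obtain ⟨M, hM⟩ := isCompact_Icc.exists_bound_of_continuousOn hg
  have hdiv_mem : ∀ {t v}, 0 < t → v ∈ Ioi 0 → v ≤ t * L → v / t ∈ Icc 0 L := fun ht hv hvL =>
    ⟨div_nonneg (le_of_lt hv) ht.le, (div_le_iff₀ ht).2 (by linarith)⟩
  have hmeas : ∀ᶠ t in atTop, AEStronglyMeasurable (F t) (volume.restrict (Ioi 0)) := by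
    filter_upwards [eventually_gt_atTop 0] with t ht
    rw [aestronglyMeasurable_indicator_iff measurableSet_Iic,
      Measure.restrict_restrict measurableSet_Iic]
    refine ContinuousOn.aestronglyMeasurable ?_ (measurableSet_Iic.inter measurableSet_Ioi)
    have hgt : ContinuousOn (fun v => g (v / t)) (Iic (t * L) ∩ Ioi 0) :=
      hg.comp (continuousOn_id.div_const t) fun v hv => hdiv_mem ht hv.2 hv.1
    exact ((continuousOn_id.pow m).mul hgt).mul (continuous_exp.comp continuous_neg).continuousOn
  have hbound : ∀ᶠ t in atTop, ∀ᵐ v ∂volume.restrict (Ioi 0),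
      ‖F t v‖ ≤ M * (v ^ m * exp (-v)) := by
    filter_upwards [eventually_gt_atTop 0] with t ht
    refine (ae_restrict_iff' measurableSet_Ioi).2 (Eventually.of_forall fun v hv => ?_)
    have hv0 : (0 : ℝ) ≤ v := le_of_lt hv
    by_cases hvL : v ≤ t * L
    · calc ‖F t v‖ = v ^ m * ‖g (v / t)‖ * exp (-v) := by
            simp [F, indicator_of_mem (mem_Iic.2 hvL), abs_of_nonneg hv0]
        _ ≤ v ^ m * M * exp (-v) := by gcongr; exact hM _ (hdiv_mem ht hv hvL)
        _ = M * (v ^ m * exp (-v)) := by ring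
    · have hM0 : 0 ≤ M := (norm_nonneg _).trans (hM 0 ⟨le_rfl, hL.le⟩)
      simp only [F, indicator_of_notMem (notMem_Iic.2 (not_le.1 hvL)), norm_zero]
      positivity
  have hlim : ∀ᵐ v ∂volume.restrict (Ioi 0),
      Tendsto (F · v) atTop (𝓝 (v ^ m * g 0 * exp (-v))) := by
    refine (ae_restrict_iff' measurableSet_Ioi).2 (Eventually.of_forall fun v hv => ?_)
    have hF_eq : ∀ᶠ t in atTop, v ^ m * g (v / t) * exp (-v) = F t v := by
      filter_upwards [eventually_ge_atTop (v / L)] with t ht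
      rw [div_le_iff₀ hL] at ht
      simp [F, indicator_of_mem (mem_Iic.2 ht)]
    have hvt : Tendsto (fun t => v / t) atTop (𝓝[Icc 0 L] 0) := by
      refine tendsto_nhdsWithin_iff.2 ⟨tendsto_const_nhds.div_atTop tendsto_id, ?_⟩
      filter_upwards [eventually_gt_atTop 0, eventually_ge_atTop (v / L)] with t ht htL
      exact hdiv_mem ht hv ((div_le_iff₀ hL).1 htL)
    exact ((((hg 0 ⟨le_rfl, hL.le⟩).tendsto.comp hvt).const_mul _).mul_const _).congr' hF_eq
  have hdct := tendsto_integral_filter_of_dominated_convergence _ hmeas hbound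
    ((integrableOn_Ioi_pow_mul_exp_neg m).const_mul M) hlim
  simp_rw [mul_right_comm _ (g 0), integral_mul_const, integral_Ioi_pow_mul_exp_neg] at hdct
  exact hdct.congr' hF

def bCoefWeight (m : ℕ) (R₁ R₂ u : ℝ) : ℝ :=
  (R₁ + u) * (R₂ ^ 2 - (R₁ + u) ^ 2) ^ m * (-(2 * R₁ + u)) ^ m

lemma bCoef_mul_pow_mul_exp (m : ℕ) (R₁ R₂ : ℝ) {t : ℝ} (ht : 0 < t) :
    bCoef m R₁ R₂ t * t ^ (m + 2) * exp (R₁ * t) =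
      t ^ (m + 1) * ∫ u in 0..R₂ - R₁, u ^ m * bCoefWeight m R₁ R₂ u * exp (-(u * t)) := by
  have hshift := intervalIntegral.integral_comp_add_left
    (fun s => s * (R₂ ^ 2 - s ^ 2) ^ m * (R₁ ^ 2 - s ^ 2) ^ m * exp (-(s * t))) R₁
    (a := 0) (b := R₂ - R₁)
  simp only [add_zero, add_sub_cancel] at hshift
  have hintegrand : ∀ u,
      (R₁ + u) * (R₂ ^ 2 - (R₁ + u) ^ 2) ^ m * (R₁ ^ 2 - (R₁ + u) ^ 2) ^ m * exp (-((R₁ + u) * t)) =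
        exp (-(R₁ * t)) * (u ^ m * bCoefWeight m R₁ R₂ u * exp (-(u * t))) := by
    intro u
    rw [show R₁ ^ 2 - (R₁ + u) ^ 2 = u * (-(2 * R₁ + u)) by ring,
      show -((R₁ + u) * t) = -(R₁ * t) + -(u * t) by ring, mul_pow, exp_add, bCoefWeight]
    ring
  simp only [hintegrand, intervalIntegral.integral_const_mul] at hshift
  rw [bCoef, ← hshift, exp_neg]
  field_simp
  ring

theorem stmt_3_general (m : ℕ) (R₁ R₂ : ℝ) (hR₁ : 0 < R₁) (hR : R₁ < R₂) :
    Filter.Tendsto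
      (fun t : ℝ =>
        bCoef m R₁ R₂ t * t ^ (m + 2) * Real.exp (R₁ * t) /
          ((-1 : ℝ) ^ m * 2 ^ m * (Nat.factorial m : ℝ) * R₁ ^ (m + 1) *
            (R₂ ^ 2 - R₁ ^ 2) ^ m))
      Filter.atTop (nhds 1) := by
  set D : ℝ := (-1) ^ m * 2 ^ m * m ! * R₁ ^ (m + 1) * (R₂ ^ 2 - R₁ ^ 2) ^ m
  have hD : (m ! : ℝ) * bCoefWeight m R₁ R₂ 0 = D := by
    rw [bCoefWeight, add_zero, add_zero, show -(2 * R₁) = -1 * 2 * R₁ by ring, mul_pow, mul_pow]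
    ring
  have hD0 : D ≠ 0 := by
    have : 0 < R₂ ^ 2 - R₁ ^ 2 := by nlinarith
    positivity
  have hweight : Continuous (bCoefWeight m R₁ R₂) := by unfold bCoefWeight; fun_prop
  have hwatson := tendsto_pow_succ_mul_intervalIntegral_pow_mul_exp_neg_mul m (sub_pos.2 hR)
    hweight.continuousOn
  rw [hD] at hwatson
  refine (div_self hD0 ▸ hwatson.div_const D).congr' ?_
  filter_upwards [eventually_gt_atTop 0] with t ht
  rw [bCoef_mul_pow_mul_exp m R₁ R₂ ht]

theorem stmt_3 (m : ℕ) (hm : 1 ≤ m) (R₁ R₂ : ℝ) (hR₁ : 0 < R₁) (hR : R₁ < R₂) :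
    Filter.Tendsto
      (fun t : ℝ =>
        bCoef m R₁ R₂ t * t ^ (m + 2) * Real.exp (R₁ * t) /
          ((-1 : ℝ) ^ m * 2 ^ m * (Nat.factorial m : ℝ) * R₁ ^ (m + 1) *
            (R₂ ^ 2 - R₁ ^ 2) ^ m))
      Filter.atTop (nhds 1) :=
  stmt_3_general m R₁ R₂ hR₁ hR
end
end

section
/- Let m ≥ 1 be an integer, η > 0, p ∈ ℝ³, and ξ ∈ ℝ³ with ξ ≠ 0. Then ∫_{B_η(p)} e^{−i⟨x,ξ⟩} (η² − |x − p|²)^m dx = 4π · η^{2(1+m)} · e^{−i⟨p,ξ⟩} · A_m(|ξ|)/|ξ|, where B_η(p) is the open ball of radius η centered at p, the integral is the (complex-valued) Lebesgue integral over ℝ³, and ⟨·,·⟩ is the Euclidean inner product. -/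
/-!
Translating `x = p + y` splits off the phase `exp (-i⟨p, ξ⟩)`, and a reflection carrying `ξ` to
`‖ξ‖ e₀` (a volume-preserving isometry) puts the frequency on the first axis. Slicing
`ℝ³ = ℝ × ℝ²`, the integral of `(η² - t² - ‖w‖²)₊ ^ m` over the plane is, in polar coordinates,
`π (η² - t²)₊ ^ (m + 1) / (m + 1)`. What is left is the one-dimensional Fourier transform of the
even function `(η² - t²)₊ ^ (m + 1)`, a cosine integral, and one integration by parts turns it
into the sine integral `A_m`.
-/

open MeasureTheory RealInnerProductSpace

noncomputable section

/-- `A_m(z) = ∫₀¹ s (1 − s²)^m sin(η z s) ds` (real argument). -/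
def Afun (m : ℕ) (η z : ℝ) : ℝ :=
  ∫ s in (0:ℝ)..1, s * (1 - s ^ 2) ^ m * Real.sin (η * z * s)

open Set Metric Complex
open scoped Real

/-- `(a - s)₊ ^ m`, vanishing for `s ≥ a` also when `m = 0`. -/
def truncPow (m : ℕ) (a : ℝ) : ℝ → ℝ := (Iio a).indicator fun s => (a - s) ^ m

theorem truncPow_add (m : ℕ) (a b u : ℝ) : truncPow m a (b + u) = truncPow m (a - b) u := by
  simp only [truncPow, indicator, mem_Iio, lt_sub_iff_add_lt', sub_sub]

theorem mul_truncPow_norm_sq_eq_indicator {E : Type*} [SeminormedAddCommGroup E] (g : E → ℂ)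
    (m : ℕ) {r : ℝ} (hr : 0 ≤ r) :
    (fun y => g y * truncPow m (r ^ 2) (‖y‖ ^ 2))
      = (ball 0 r).indicator fun y => g y * ((r ^ 2 - ‖y‖ ^ 2) ^ m : ℝ) := by
  ext y
  simp only [truncPow, indicator, mem_Iio, mem_ball_zero_iff, sq_lt_sq₀ (norm_nonneg y) hr]
  split_ifs <;> simp

theorem integral_Ioi_truncPow (m : ℕ) (a : ℝ) :
    ∫ u in Ioi 0, truncPow m a u = truncPow (m + 1) a 0 / (m + 1) := by
  rw [truncPow, setIntegral_indicator measurableSet_Iio, Ioi_inter_Iio]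
  rcases le_or_gt a 0 with ha | ha
  · simp [truncPow, ha.not_gt]
  · rw [← integral_Ioc_eq_integral_Ioo, ← intervalIntegral.integral_of_le ha.le,
      intervalIntegral.integral_comp_sub_left (fun s => s ^ m), integral_pow]
    simp [truncPow, ha]

theorem integrable_mul_truncPow_norm_sq {E : Type*} [NormedAddCommGroup E] [MeasurableSpace E]
    [BorelSpace E] [ProperSpace E] (μ : Measure E) [IsFiniteMeasureOnCompacts μ] {g : E → ℂ}
    (hg : Continuous g) (m : ℕ) {r : ℝ} (hr : 0 ≤ r) :
    Integrable (fun y => g y * truncPow m (r ^ 2) (‖y‖ ^ 2)) μ := by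
  rw [mul_truncPow_norm_sq_eq_indicator g m hr, integrable_indicator_iff measurableSet_ball]
  exact ((by fun_prop : Continuous fun y => g y * ((r ^ 2 - ‖y‖ ^ 2) ^ m : ℝ)).continuousOn
    |>.integrableOn_compact (isCompact_closedBall 0 r)).mono_set ball_subset_closedBall

theorem intervalIntegral.integral_neg_self_eq_integral_add_comp_neg {E : Type*}
    [NormedAddCommGroup E] [NormedSpace ℝ E] {f : ℝ → E} {a : ℝ}
    (hf : IntervalIntegrable f volume (-a) a) :
    ∫ x in -a..a, f x = ∫ x in 0..a, (f x + f (-x)) := by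
  have h0 : (0 : ℝ) ∈ uIcc (-a) a := by grind [mem_uIcc]
  have h0a : IntervalIntegrable f volume 0 a := hf.mono_set (uIcc_subset_uIcc h0 right_mem_uIcc)
  have hneg : IntervalIntegrable f volume (-a) 0 := hf.mono_set (uIcc_subset_uIcc left_mem_uIcc h0)
  have hneg' : IntervalIntegrable (fun x => f (-x)) volume 0 a := by
    simpa using (hneg.comp_sub_left 0).symm
  rw [intervalIntegral.integral_add h0a hneg', intervalIntegral.integral_comp_neg, neg_zero,
    add_comm, intervalIntegral.integral_add_adjacent_intervals hneg h0a]

theorem exp_neg_I_mul_add_exp_neg_I_mul_neg (x : ℝ) :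
    cexp (-(I * x)) + cexp (-(I * ↑(-x))) = ((2 * Real.cos x : ℝ) : ℂ) := by
  push_cast
  rw [two_cos]
  ring_nf

theorem integral_mul_truncPow_sq (n : ℕ) {r : ℝ} (hr : 0 ≤ r) (g : ℝ → ℂ) :
    ∫ t, g t * truncPow n (r ^ 2) (t ^ 2) = ∫ t in -r..r, g t * ((r ^ 2 - t ^ 2) ^ n : ℝ) := by
  have hsupp : (fun t => g t * truncPow n (r ^ 2) (t ^ 2)) =
      (Ioo (-r) r).indicator fun t => g t * ((r ^ 2 - t ^ 2) ^ n : ℝ) := by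
    ext t
    simp only [truncPow, indicator, mem_Iio, mem_Ioo, sq_lt_sq, abs_of_nonneg hr, abs_lt]
    split_ifs <;> simp
  rw [hsupp, integral_indicator measurableSet_Ioo, ← integral_Ioc_eq_integral_Ioo,
    ← intervalIntegral.integral_of_le (by linarith)]

theorem intervalIntegral.integral_mul_sq_sub_sq_pow (n : ℕ) {r : ℝ} (hr : r ≠ 0) (f : ℝ → ℝ) :
    ∫ t in 0..r, f t * (r ^ 2 - t ^ 2) ^ n
      = r ^ (2 * n + 1) * ∫ s in 0..1, f (r * s) * (1 - s ^ 2) ^ n := by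
  have h := intervalIntegral.integral_comp_mul_left (a := 0) (b := 1)
    (fun t => f t * (r ^ 2 - t ^ 2) ^ n) hr
  have hs (s : ℝ) : f (r * s) * (r ^ 2 - (r * s) ^ 2) ^ n
      = r ^ (2 * n) * (f (r * s) * (1 - s ^ 2) ^ n) := by
    rw [show r ^ 2 - (r * s) ^ 2 = r ^ 2 * (1 - s ^ 2) by ring, mul_pow, ← pow_mul]
    ring
  simp only [hs, intervalIntegral.integral_const_mul, mul_zero, mul_one, smul_eq_mul] at h
  rw [eq_inv_mul_iff_mul_eq₀ hr] at h
  rw [← h]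
  ring

theorem integral_exp_mul_truncPow_sq (n : ℕ) {r : ℝ} (hr : 0 < r) (τ : ℝ) :
    ∫ t, cexp (-(I * ↑(τ * t))) * truncPow n (r ^ 2) (t ^ 2)
      = ↑(2 * r ^ (2 * n + 1) * ∫ s in 0..1, Real.cos (r * τ * s) * (1 - s ^ 2) ^ n) := by
  rw [integral_mul_truncPow_sq n hr.le,
    intervalIntegral.integral_neg_self_eq_integral_add_comp_neg (by
      apply Continuous.intervalIntegrable; fun_prop)]
  have heven (t : ℝ) : cexp (-(I * ↑(τ * t))) * ↑((r ^ 2 - t ^ 2) ^ n)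
      + cexp (-(I * ↑(τ * -t))) * ↑((r ^ 2 - (-t) ^ 2) ^ n)
      = ((2 * Real.cos (τ * t) * (r ^ 2 - t ^ 2) ^ n : ℝ) : ℂ) := by
    rw [neg_sq, ← add_mul, mul_neg, exp_neg_I_mul_add_exp_neg_I_mul_neg, ← ofReal_mul]
  simp only [heven]
  rw [intervalIntegral.integral_ofReal,
    intervalIntegral.integral_mul_sq_sub_sq_pow n hr.ne' (fun t => 2 * Real.cos (τ * t))]
  simp only [mul_assoc, intervalIntegral.integral_const_mul]
  ring_nf

theorem intervalIntegral.mul_integral_cos_mul_one_sub_sq_pow_succ (m : ℕ) (k : ℝ) :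
    k * ∫ s in 0..1, Real.cos (k * s) * (1 - s ^ 2) ^ (m + 1)
      = 2 * (m + 1) * ∫ s in 0..1, s * (1 - s ^ 2) ^ m * Real.sin (k * s) := by
  have hu (s : ℝ) : HasDerivAt (fun s : ℝ => (1 - s ^ 2) ^ (m + 1))
      (-(2 * ((m : ℝ) + 1)) * (s * (1 - s ^ 2) ^ m)) s :=
    (((hasDerivAt_pow 2 s).const_sub 1).fun_pow (m + 1)).congr_deriv (by simp; ring)
  have hv (s : ℝ) : HasDerivAt (fun s : ℝ => Real.sin (k * s)) (Real.cos (k * s) * k) s := by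
    simpa using ((hasDerivAt_id s).const_mul k).sin
  have hparts := intervalIntegral.integral_mul_deriv_eq_deriv_mul (a := 0) (b := 1)
    (fun s _ => hu s) (fun s _ => hv s)
    (by apply Continuous.intervalIntegrable; fun_prop)
    (by apply Continuous.intervalIntegrable; fun_prop)
  calc k * ∫ s in 0..1, Real.cos (k * s) * (1 - s ^ 2) ^ (m + 1)
      = ∫ s in 0..1, (1 - s ^ 2) ^ (m + 1) * (Real.cos (k * s) * k) := by
        rw [← intervalIntegral.integral_const_mul]; congr 1 with s; ring
    _ = -∫ s in 0..1, -(2 * ((m : ℝ) + 1)) * (s * (1 - s ^ 2) ^ m) * Real.sin (k * s) := by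
        simp [hparts]
    _ = _ := by
        rw [← intervalIntegral.integral_neg, ← intervalIntegral.integral_const_mul]
        congr 1 with s
        ring

theorem integral_fun_norm_sq_euclideanSpace_fin_two {F : Type*} [NormedAddCommGroup F]
    [NormedSpace ℝ F] (g : ℝ → F) :
    ∫ w : EuclideanSpace ℝ (Fin 2), g (‖w‖ ^ 2) = π • ∫ u in Ioi 0, g u := by
  rw [integral_fun_norm_addHaar volume (fun r => g (r ^ 2)), ← integral_comp_rpow_Ioi g two_ne_zero]
  have hball : volume.real (ball (0 : EuclideanSpace ℝ (Fin 2)) 1) = π := by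
    simp [measureReal_def, Real.pi_nonneg]
  rw [finrank_euclideanSpace_fin, hball, smul_comm, ← Nat.cast_smul_eq_nsmul ℝ, ← integral_smul]
  congr 1
  refine setIntegral_congr_fun measurableSet_Ioi fun x _ => ?_
  simp only [smul_smul]
  norm_num

theorem integral_euclideanSpace_fin_succ {F : Type*} [NormedAddCommGroup F] [NormedSpace ℝ F]
    {n : ℕ} {f : EuclideanSpace ℝ (Fin (n + 1)) → F} (hf : Integrable f) :
    ∫ x, f x = ∫ t, ∫ w : EuclideanSpace ℝ (Fin n), f (WithLp.toLp 2 (Fin.cons t w.ofLp)) := by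
  let Φ : ℝ × EuclideanSpace ℝ (Fin n) ≃ᵐ EuclideanSpace ℝ (Fin (n + 1)) :=
    ((MeasurableEquiv.refl ℝ).prodCongr (MeasurableEquiv.toLp 2 (Fin n → ℝ)).symm).trans
      ((MeasurableEquiv.piFinSuccAbove (fun _ => ℝ) 0).symm.trans (MeasurableEquiv.toLp 2 _))
  have hcons : MeasurePreserving (MeasurableEquiv.piFinSuccAbove (fun _ : Fin (n + 1) => ℝ) 0).symm
      (volume.prod volume) volume := by
    simpa [volume_pi] using
      (measurePreserving_piFinSuccAbove (fun _ => (volume : Measure ℝ)) 0).symm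
  have hΦ : MeasurePreserving Φ (volume.prod volume) volume :=
    ((MeasurePreserving.id volume).prod
      (EuclideanSpace.volume_preserving_symm_measurableEquiv_toLp (Fin n))).trans <|
      hcons.trans (EuclideanSpace.volume_preserving_symm_measurableEquiv_toLp (Fin (n + 1))).symm
  rw [← hΦ.integral_comp',
    integral_prod (fun z => f (Φ z)) ((hΦ.integrable_comp_emb Φ.measurableEmbedding).mpr hf)]
  congr 1 with t
  congr 1 with w
  simp only [Φ, MeasurableEquiv.trans_apply, MeasurableEquiv.piFinSuccAbove_symm_apply,
    Fin.insertNthEquiv_zero]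
  rfl

theorem norm_sq_toLp_cons {n : ℕ} (t : ℝ) (w : EuclideanSpace ℝ (Fin n)) :
    ‖(WithLp.toLp 2 (Fin.cons t w.ofLp) : EuclideanSpace ℝ (Fin (n + 1)))‖ ^ 2
      = t ^ 2 + ‖w‖ ^ 2 := by
  simp [EuclideanSpace.norm_sq_eq, Fin.sum_univ_succ]

theorem integral_exp_mul_truncPow_norm_sq_fin_three (m : ℕ) {r : ℝ} (hr : 0 ≤ r) (τ : ℝ) :
    ∫ y : EuclideanSpace ℝ (Fin 3), cexp (-(I * ↑(τ * y 0))) * truncPow m (r ^ 2) (‖y‖ ^ 2)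
      = (π / (m + 1)) * ∫ t, cexp (-(I * ↑(τ * t))) * truncPow (m + 1) (r ^ 2) (t ^ 2) := by
  rw [integral_euclideanSpace_fin_succ (integrable_mul_truncPow_norm_sq volume (by fun_prop) m hr),
    ← integral_const_mul]
  congr 1 with t
  simp only [norm_sq_toLp_cons, truncPow_add, Fin.cons_zero]
  rw [integral_const_mul, integral_fun_norm_sq_euclideanSpace_fin_two
    (fun u => (truncPow m (r ^ 2 - t ^ 2) u : ℂ)), integral_complex_ofReal, integral_Ioi_truncPow,
    ← truncPow_add, add_zero, real_smul]
  push_cast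
  ring

theorem integral_comp_inner_norm_eq_of_norm_eq {E F : Type*} [NormedAddCommGroup E]
    [InnerProductSpace ℝ E] [FiniteDimensional ℝ E] [MeasurableSpace E] [BorelSpace E]
    [NormedAddCommGroup F] [NormedSpace ℝ F] (g : ℝ → ℝ → F) {ξ ζ : E} (h : ‖ξ‖ = ‖ζ‖) :
    ∫ y, g ⟪y, ξ⟫ ‖y‖ = ∫ y, g ⟪y, ζ⟫ ‖y‖ := by
  set R := (ℝ ∙ (ζ - ξ))ᗮ.reflection
  have hR : R ζ = ξ := Submodule.reflection_sub h.symm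
  rw [← R.measurePreserving.integral_comp R.toHomeomorph.measurableEmbedding]
  simp only [← hR, LinearIsometryEquiv.inner_map_map, LinearIsometryEquiv.norm_map]

theorem setIntegral_ball_exp_inner_mul_comp_sub {E : Type*} [NormedAddCommGroup E]
    [InnerProductSpace ℝ E] [MeasurableSpace E] [BorelSpace E] (μ : Measure E)
    [μ.IsAddRightInvariant] (f : E → ℂ) (p ξ : E) (r : ℝ) :
    ∫ x in ball p r, cexp (-(I * ⟪x, ξ⟫)) * f (x - p) ∂μ
      = cexp (-(I * ⟪p, ξ⟫)) * ∫ y in ball 0 r, cexp (-(I * ⟪y, ξ⟫)) * f y ∂μ := by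
  rw [← (measurePreserving_add_right μ p).setIntegral_preimage_emb (measurableEmbedding_addRight p),
    preimage_add_right_ball, sub_self, ← integral_const_mul]
  refine setIntegral_congr_fun measurableSet_ball fun y _ => ?_
  simp only [add_sub_cancel_right, inner_add_left, ofReal_add]
  rw [mul_add, neg_add, exp_add]
  ring

theorem stmt_4_general (m : ℕ) (η : ℝ) (hη : 0 < η)
    (p ξ : EuclideanSpace ℝ (Fin 3)) (hξ : ξ ≠ 0) :
    (∫ x in Metric.ball p η,
        Complex.exp (-(Complex.I * ((inner ℝ x ξ : ℝ) : ℂ))) *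
          (((η ^ 2 - ‖x - p‖ ^ 2) ^ m : ℝ) : ℂ))
      = ((4 * Real.pi * η ^ (2 * (1 + m)) : ℝ) : ℂ) *
          Complex.exp (-(Complex.I * ((inner ℝ p ξ : ℝ) : ℂ))) *
          ((Afun m η ‖ξ‖ / ‖ξ‖ : ℝ) : ℂ) := by
  set τ := ‖ξ‖
  have hτ : 0 < τ := norm_pos_iff.mpr hξ
  have hζ : ‖ξ‖ = ‖EuclideanSpace.single (0 : Fin 3) τ‖ := by simp [τ]
  have hcoeff : π / (m + 1) * (2 * η ^ (2 * (m + 1) + 1) *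
      ∫ s in 0..1, Real.cos (η * τ * s) * (1 - s ^ 2) ^ (m + 1))
      = 4 * π * η ^ (2 * (1 + m)) * (Afun m η τ / τ) := by
    have hibp : η * τ * ∫ s in 0..1, Real.cos (η * τ * s) * (1 - s ^ 2) ^ (m + 1)
        = 2 * (m + 1) * Afun m η τ :=
      intervalIntegral.mul_integral_cos_mul_one_sub_sq_pow_succ m (η * τ)
    field_simp
    linear_combination (2 * η ^ (2 * (1 + m))) * hibp
  rw [setIntegral_ball_exp_inner_mul_comp_sub volume (fun y => ((η ^ 2 - ‖y‖ ^ 2) ^ m : ℝ)) p ξ η,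
    ← integral_indicator measurableSet_ball, ← mul_truncPow_norm_sq_eq_indicator _ m hη.le,
    integral_comp_inner_norm_eq_of_norm_eq
      (fun s ρ => cexp (-(I * s)) * truncPow m (η ^ 2) (ρ ^ 2)) hζ]
  simp only [EuclideanSpace.inner_single_right, conj_trivial]
  rw [integral_exp_mul_truncPow_norm_sq_fin_three m hη.le, integral_exp_mul_truncPow_sq _ hη]
  have hcoeffℂ := congrArg ((↑) : ℝ → ℂ) hcoeff
  push_cast at hcoeffℂ ⊢
  linear_combination cexp (-(I * ⟪p, ξ⟫)) * hcoeffℂ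

theorem stmt_4 (m : ℕ) (hm : 1 ≤ m) (η : ℝ) (hη : 0 < η)
    (p ξ : EuclideanSpace ℝ (Fin 3)) (hξ : ξ ≠ 0) :
    (∫ x in Metric.ball p η,
        Complex.exp (-(Complex.I * ((inner ℝ x ξ : ℝ) : ℂ))) *
          (((η ^ 2 - ‖x - p‖ ^ 2) ^ m : ℝ) : ℂ))
      = ((4 * Real.pi * η ^ (2 * (1 + m)) : ℝ) : ℂ) *
          Complex.exp (-(Complex.I * ((inner ℝ p ξ : ℝ) : ℂ))) *
          ((Afun m η ‖ξ‖ / ‖ξ‖ : ℝ) : ℂ) :=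
  stmt_4_general m η hη p ξ hξ
end
end

section
/- Let f : ℂ → ℂ be an entire function, and suppose there exist constants C > 0 and a ≥ 0 such that |f(z)| ≤ C e^{a · Im z} for all z ∈ ℂ with Im z ≥ 0. Let d > a and τ > 0. Then ∫_{−∞}^{∞} f(r) e^{i d r}/(r² + τ²) dr = (π/τ) · f(iτ) · e^{−dτ}, where the left-hand side is an absolutely convergent complex-valued Lebesgue integral over the real line. -/
/-! With `g z = f z * exp (I * d * z)`, which is entire and bounded by `C` on the closed upper
half-plane because `a ≤ d`, the function `H z = (g z - g (I * τ)) / (z ^ 2 + τ ^ 2)` has a removable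
singularity at `I * τ` and is `O(|z|⁻²)` in the upper half-plane. Cauchy's theorem on the rectangles
`[-R, R] × [0, R]` then gives `∫ H = 0` over the real line, that is
`∫ g x / (x ^ 2 + τ ^ 2) = g (I * τ) * ∫ (x ^ 2 + τ ^ 2)⁻¹ = π / τ * g (I * τ)`. -/

open MeasureTheory Complex Filter Topology
open scoped Real

section InvSqAddSq

variable {τ : ℝ}

lemma inv_sq_add_sq_eq (hτ : τ ≠ 0) (x : ℝ) :
    (x ^ 2 + τ ^ 2)⁻¹ = (τ ^ 2)⁻¹ * (1 + (τ⁻¹ * x) ^ 2)⁻¹ := by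
  field_simp
  ring

lemma integrable_inv_sq_add_sq (hτ : τ ≠ 0) : Integrable fun x : ℝ => (x ^ 2 + τ ^ 2)⁻¹ := by
  simp_rw [inv_sq_add_sq_eq hτ]
  exact (integrable_inv_one_add_sq.comp_mul_left' (inv_ne_zero hτ)).const_mul _

lemma integral_univ_inv_sq_add_sq (hτ : τ ≠ 0) : ∫ x : ℝ, (x ^ 2 + τ ^ 2)⁻¹ = π / |τ| := by
  simp_rw [inv_sq_add_sq_eq hτ]
  rw [integral_const_mul, Measure.integral_comp_inv_mul_left (fun y => (1 + y ^ 2)⁻¹) τ,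
    integral_univ_inv_one_add_sq, smul_eq_mul, ← sq_abs τ]
  have : |τ| ≠ 0 := abs_ne_zero.2 hτ
  field_simp

lemma ofReal_inv_sq_add_sq (x : ℝ) :
    ((x : ℂ) ^ 2 + (τ : ℂ) ^ 2)⁻¹ = ((x ^ 2 + τ ^ 2)⁻¹ : ℝ) := by
  push_cast; rfl

lemma integrable_complex_inv_sq_add_sq (hτ : τ ≠ 0) :
    Integrable fun x : ℝ => ((x : ℂ) ^ 2 + (τ : ℂ) ^ 2)⁻¹ := by
  simp_rw [ofReal_inv_sq_add_sq]
  exact (integrable_inv_sq_add_sq hτ).ofReal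

lemma integral_complex_inv_sq_add_sq (hτ : τ ≠ 0) :
    ∫ x : ℝ, ((x : ℂ) ^ 2 + (τ : ℂ) ^ 2)⁻¹ = (π / |τ| : ℝ) := by
  simp_rw [ofReal_inv_sq_add_sq]
  rw [integral_complex_ofReal, integral_univ_inv_sq_add_sq hτ]

lemma integrable_div_sq_add_sq {h : ℝ → ℂ} (hh : AEStronglyMeasurable h) {M : ℝ}
    (hM : ∀ x, ‖h x‖ ≤ M) (hτ : τ ≠ 0) :
    Integrable fun x : ℝ => h x / ((x : ℂ) ^ 2 + (τ : ℂ) ^ 2) := by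
  simpa only [div_eq_mul_inv] using
    (integrable_complex_inv_sq_add_sq hτ).bdd_mul hh (ae_of_all _ hM)

end InvSqAddSq

section UpperHalfPlane

variable {E : Type*} [NormedAddCommGroup E] [NormedSpace ℂ E] {H : ℂ → E}

theorem intervalIntegral_eq_upper_rect_sides (hc : ContinuousOn H {z | 0 ≤ z.im})
    (hd : DifferentiableOn ℂ H {z | 0 < z.im}) {R : ℝ} (hR : 0 ≤ R) :
    ∫ x in -R..R, H x =
      (∫ x in -R..R, H (x + R * I)) - I • (∫ y in (0 : ℝ)..R, H (R + y * I))
        + I • ∫ y in (0 : ℝ)..R, H (-R + y * I) := by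
  have key := integral_boundary_rect_eq_zero_of_continuousOn_of_differentiableOn H
    (-(R : ℂ)) (R + R * I) ?_ ?_
  · simp only [neg_re, neg_im, add_re, add_im, ofReal_re, ofReal_im, mul_re, mul_im, I_re, I_im,
      mul_zero, mul_one, sub_zero, zero_add, add_zero, neg_zero, ofReal_zero, zero_mul,
      ofReal_neg] at key
    rw [← sub_eq_zero, ← key]
    abel
  · refine hc.mono fun w hw => ?_
    simp only [mem_reProdIm, neg_im, add_im, ofReal_im, mul_im, ofReal_re, I_re, I_im, mul_zero,
      mul_one, zero_add, add_zero, neg_zero, Set.uIcc_of_le hR] at hw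
    exact hw.2.1
  · refine hd.mono fun w hw => ?_
    simp only [mem_reProdIm, neg_im, add_im, ofReal_im, mul_im, ofReal_re, I_re, I_im, mul_zero,
      mul_one, zero_add, add_zero, neg_zero, min_eq_left hR] at hw
    exact hw.2.1

theorem norm_intervalIntegral_le_of_upper_bound (hc : ContinuousOn H {z | 0 ≤ z.im})
    (hd : DifferentiableOn ℂ H {z | 0 < z.im}) {R B : ℝ} (hR : 0 ≤ R)
    (hB : ∀ z : ℂ, 0 ≤ z.im → R ≤ ‖z‖ → ‖H z‖ ≤ B) :
    ‖∫ x in -R..R, H x‖ ≤ 4 * R * B := by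
  have htop : ‖∫ x in -R..R, H (x + R * I)‖ ≤ B * |R - -R| :=
    intervalIntegral.norm_integral_le_of_norm_le_const fun x _ =>
      hB _ (by simpa using hR) (by simpa [abs_of_nonneg hR] using abs_im_le_norm (x + R * I))
  have hside : ∀ x : ℝ, |x| = R → ‖∫ y in (0 : ℝ)..R, H (x + y * I)‖ ≤ B * |R - 0| :=
    fun x hx => intervalIntegral.norm_integral_le_of_norm_le_const fun y hy => by
      rw [Set.uIoc_of_le hR] at hy
      exact hB _ (by simpa using hy.1.le) (by simpa [hx] using abs_re_le_norm (x + y * I))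
  have hright := hside R (abs_of_nonneg hR)
  have hleft := hside (-R) (by rw [abs_neg, abs_of_nonneg hR])
  rw [intervalIntegral_eq_upper_rect_sides hc hd hR]
  push_cast at hleft
  calc _ ≤ ‖∫ x in -R..R, H (x + R * I)‖ + ‖I • ∫ y in (0 : ℝ)..R, H (R + y * I)‖
        + ‖I • ∫ y in (0 : ℝ)..R, H (-R + y * I)‖ :=
          (norm_add_le _ _).trans (add_le_add_left (norm_sub_le _ _) _)
    _ ≤ B * |R - -R| + B * |R - 0| + B * |R - 0| := by
      simp only [norm_smul, norm_I, one_mul]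
      gcongr
    _ = 4 * R * B := by
      rw [sub_neg_eq_add, sub_zero, abs_of_nonneg hR, abs_of_nonneg (by linarith)]
      ring

theorem integral_ofReal_eq_zero_of_upper_decay [CompleteSpace E]
    (hc : ContinuousOn H {z | 0 ≤ z.im}) (hd : DifferentiableOn ℂ H {z | 0 < z.im})
    (hint : Integrable fun x : ℝ => H x) {K R₀ : ℝ}
    (hdecay : ∀ R ≥ R₀, ∀ z : ℂ, 0 ≤ z.im → R ≤ ‖z‖ → ‖H z‖ ≤ K / R ^ 2) :
    ∫ x : ℝ, H x = 0 := by
  refine tendsto_nhds_unique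
    (intervalIntegral_tendsto_integral hint tendsto_neg_atTop_atBot tendsto_id) ?_
  have hlim : Tendsto (fun R : ℝ => 4 * K / R) atTop (𝓝 0) :=
    tendsto_const_nhds.div_atTop tendsto_id
  refine squeeze_zero_norm' ?_ hlim
  filter_upwards [eventually_ge_atTop R₀, eventually_gt_atTop 0] with R hR₀ hR
  calc ‖∫ x in -R..R, H x‖ ≤ 4 * R * (K / R ^ 2) :=
        norm_intervalIntegral_le_of_upper_bound hc hd hR.le (hdecay R hR₀)
    _ = 4 * K / R := by field_simp

end UpperHalfPlane

section Poisson

variable {g : ℂ → ℂ} {τ M : ℝ}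

lemma add_I_mul_ofReal_ne_zero {z : ℂ} (hz : 0 ≤ z.im) (hτ : 0 < τ) : z + I * τ ≠ 0 := by
  intro h
  have := congrArg im h
  simp only [add_im, mul_im, I_re, I_im, ofReal_re, ofReal_im, zero_mul, one_mul, zero_add,
    zero_im] at this
  linarith

lemma dslope_div_add_I_mul_ofReal (hτ : τ ≠ 0) (x : ℝ) :
    dslope g (I * τ) x / (x + I * τ) = (g x - g (I * τ)) / ((x : ℂ) ^ 2 + (τ : ℂ) ^ 2) := by
  have hx : (x : ℂ) ≠ I * τ := fun h => hτ <| by simpa using (congrArg im h).symm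
  rw [dslope_of_ne g hx, slope_def_field, div_div]
  congr 1
  linear_combination -(τ : ℂ) ^ 2 * I_sq

lemma norm_dslope_div_add_I_mul_le (hM : ∀ z : ℂ, 0 ≤ z.im → ‖g z‖ ≤ M) (hτ : 0 < τ) {R : ℝ}
    (hR : 2 * τ ≤ R) {z : ℂ} (hz : 0 ≤ z.im) (hRz : R ≤ ‖z‖) :
    ‖dslope g (I * τ) z / (z + I * τ)‖ ≤ 8 * M / R ^ 2 := by
  have hc : ‖I * (τ : ℂ)‖ = τ := by simp [abs_of_pos hτ]
  have hsub : R / 2 ≤ ‖z - I * τ‖ := by linarith [norm_sub_norm_le z (I * τ)]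
  have hadd : R / 2 ≤ ‖z + I * τ‖ := by linarith [norm_sub_le_norm_add z (I * τ)]
  have hzc : z ≠ I * τ := fun h => by
    rw [h, sub_self, norm_zero] at hsub; linarith
  have hnum : ‖g z - g (I * τ)‖ ≤ 2 * M := by
    linarith [norm_sub_le (g z) (g (I * τ)), hM z hz, hM (I * τ) (by simp [hτ.le])]
  rw [dslope_of_ne g hzc, slope_def_field, div_div, norm_div, norm_mul]
  calc ‖g z - g (I * τ)‖ / (‖z - I * τ‖ * ‖z + I * τ‖) ≤ 2 * M / (R / 2 * (R / 2)) := by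
        have hR0 : 0 < R / 2 := by linarith
        gcongr
        linarith [norm_nonneg (g z), hM z hz]
    _ = 8 * M / R ^ 2 := by ring

theorem integral_div_sq_add_sq_of_bounded (hg : Differentiable ℂ g)
    (hM : ∀ z : ℂ, 0 ≤ z.im → ‖g z‖ ≤ M) (hτ : 0 < τ) :
    Integrable (fun x : ℝ => g x / ((x : ℂ) ^ 2 + (τ : ℂ) ^ 2)) ∧
      ∫ x : ℝ, g x / ((x : ℂ) ^ 2 + (τ : ℂ) ^ 2) = (π / τ : ℝ) * g (I * τ) := by
  set H : ℂ → ℂ := fun z => dslope g (I * τ) z / (z + I * τ)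
  have hH : DifferentiableOn ℂ H {z | 0 ≤ z.im} :=
    (((differentiableOn_dslope univ_mem).2 hg.differentiableOn).mono (Set.subset_univ _)).div
      (by fun_prop) fun z hz => add_I_mul_ofReal_ne_zero hz hτ
  have hA : Integrable fun x : ℝ => g x / ((x : ℂ) ^ 2 + (τ : ℂ) ^ 2) :=
    integrable_div_sq_add_sq (hg.continuous.comp continuous_ofReal).aestronglyMeasurable
      (fun x => hM x (by simp)) hτ.ne'
  have hB := integrable_div_sq_add_sq aestronglyMeasurable_const
    (fun _ => le_refl ‖g (I * τ)‖) hτ.ne'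
  have hHx : (fun x : ℝ => H x) = fun x : ℝ =>
      g x / ((x : ℂ) ^ 2 + (τ : ℂ) ^ 2) - g (I * τ) / ((x : ℂ) ^ 2 + (τ : ℂ) ^ 2) :=
    funext fun x => by rw [← sub_div]; exact dslope_div_add_I_mul_ofReal hτ.ne' x
  have hH0 : ∫ x : ℝ, H x = 0 :=
    integral_ofReal_eq_zero_of_upper_decay hH.continuousOn
      (hH.mono (Set.ofPred_subset_ofPred.2 fun _ => le_of_lt)) (hHx ▸ hA.sub hB)
      fun _ hR _ hz hRz => norm_dslope_div_add_I_mul_le hM hτ hR hz hRz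
  have hBval : ∫ x : ℝ, g (I * τ) / ((x : ℂ) ^ 2 + (τ : ℂ) ^ 2) = g (I * τ) * (π / τ : ℝ) := by
    simp only [div_eq_mul_inv (g (I * τ))]
    rw [integral_const_mul, integral_complex_inv_sq_add_sq hτ.ne', abs_of_pos hτ]
  rw [hHx, integral_sub hA hB, hBval] at hH0
  exact ⟨hA, by linear_combination hH0⟩

end Poisson

lemma norm_mul_cexp_I_mul_le {f : ℂ → ℂ} {C a d : ℝ} {z : ℂ} (hz : 0 ≤ z.im)
    (hf : ‖f z‖ ≤ C * Real.exp (a * z.im)) (had : a ≤ d) :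
    ‖f z * cexp (I * d * z)‖ ≤ C := by
  have hexp : ‖cexp (I * d * z)‖ = Real.exp (-(d * z.im)) := by
    rw [norm_exp]; congr 1; simp [mul_re]
  calc ‖f z * cexp (I * d * z)‖ = ‖f z‖ * Real.exp (-(d * z.im)) := by rw [norm_mul, hexp]
    _ ≤ ‖f z‖ * Real.exp (-(a * z.im)) := by gcongr
    _ ≤ C * Real.exp (a * z.im) * Real.exp (-(a * z.im)) := by gcongr
    _ = C := by rw [mul_assoc, ← Real.exp_add, add_neg_cancel, Real.exp_zero, mul_one]

theorem stmt_17_general (f : ℂ → ℂ) (hf : Differentiable ℂ f)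
    (C a : ℝ)
    (hbound : ∀ z : ℂ, 0 ≤ z.im → ‖f z‖ ≤ C * Real.exp (a * z.im))
    (d τ : ℝ) (hd : a < d) (hτ : 0 < τ) :
    Integrable (fun r : ℝ =>
        f r * Complex.exp (Complex.I * (d : ℂ) * (r : ℂ)) / ((r : ℂ) ^ 2 + (τ : ℂ) ^ 2)) ∧
      (∫ r : ℝ, f r * Complex.exp (Complex.I * (d : ℂ) * (r : ℂ)) / ((r : ℂ) ^ 2 + (τ : ℂ) ^ 2))
        = ((Real.pi / τ : ℝ) : ℂ) * f (Complex.I * (τ : ℂ)) *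
            ((Real.exp (-(d * τ)) : ℝ) : ℂ) := by
  have hg : Differentiable ℂ fun z => f z * cexp (I * d * z) := hf.mul (by fun_prop)
  obtain ⟨hint, hval⟩ := integral_div_sq_add_sq_of_bounded hg
    (fun z hz => norm_mul_cexp_I_mul_le hz (hbound z hz) hd.le) hτ
  refine ⟨hint, hval.trans ?_⟩
  have hexp : cexp (I * d * (I * τ)) = (Real.exp (-(d * τ)) : ℂ) := by
    rw [ofReal_exp]; congr 1; push_cast; linear_combination (d * τ : ℂ) * I_sq
  rw [hexp, mul_assoc]

theorem stmt_17 (f : ℂ → ℂ) (hf : Differentiable ℂ f)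
    (C a : ℝ) (hC : 0 < C) (ha : 0 ≤ a)
    (hbound : ∀ z : ℂ, 0 ≤ z.im → ‖f z‖ ≤ C * Real.exp (a * z.im))
    (d τ : ℝ) (hd : a < d) (hτ : 0 < τ) :
    Integrable (fun r : ℝ =>
        f r * Complex.exp (Complex.I * (d : ℂ) * (r : ℂ)) / ((r : ℂ) ^ 2 + (τ : ℂ) ^ 2)) ∧
      (∫ r : ℝ, f r * Complex.exp (Complex.I * (d : ℂ) * (r : ℂ)) / ((r : ℂ) ^ 2 + (τ : ℂ) ^ 2))
        = ((Real.pi / τ : ℝ) : ℂ) * f (Complex.I * (τ : ℂ)) *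
            ((Real.exp (-(d * τ)) : ℝ) : ℂ) :=
  stmt_17_general f hf C a hbound d τ hd hτ
end
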